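/- Let f₁,...,f_m be proper, lsc, prox-bounded with thresholds r_i, and r > max_i r_i. For any λ ∈ Λ with δ(λ) > 0, the function PA_{r,δ}(·,λ) + ((r+δ(λ))/2)|· - x̄|² is convex for every x̄ ∈ ℝ^n; in particular PA_{r,δ}(·,λ) is lower-C². -/

import Mathlib

/-!
Write `s = r + δ λ > r` and `g = -∑ λᵢ eᵣfᵢ`. Since `-eᵣfᵢ(y) ≥ -fᵢ(zᵢ) - r/2 ‖zᵢ - y‖²` and
`s > r`, the function `y ↦ g y + s/2 ‖y - x‖²` is bounded below, so `eₛg` is real valued.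
Then `-eₛg(x) + s/2 ‖x - x̄‖² = sup_y (-g y + s/2 (‖x - x̄‖² - ‖y - x‖²))` is a supremum of
functions affine in `x`, hence convex.
-/

noncomputable def moreau {n : ℕ} (r : ℝ) (f : EuclideanSpace ℝ (Fin n) → EReal)
    (x : EuclideanSpace ℝ (Fin n)) : EReal :=
  ⨅ y, f y + (((r / 2) * ‖y - x‖ ^ 2 : ℝ) : EReal)

def simplex (m : ℕ) : Set (Fin m → ℝ) :=
  {lam | (∀ i, 0 ≤ lam i) ∧ ∑ i, lam i = 1}

open Set
open scoped RealInnerProductSpace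

theorem EReal.coe_ciInf {ι : Sort*} [Nonempty ι] {F : ι → ℝ} (hF : BddBelow (range F)) :
    ((⨅ i, F i : ℝ) : EReal) = ⨅ i, (F i : EReal) :=
  Monotone.map_ciInf_of_continuousAt continuous_coe_real_ereal.continuousAt
    EReal.coe_strictMono.monotone hF

lemma BddBelow.range_sum_mul {ι α : Type*} (t : Finset ι) {w : ι → ℝ} (hw : ∀ i, 0 ≤ w i)
    {φ : ι → α → ℝ} (hφ : ∀ i, BddBelow (range (φ i))) :
    BddBelow (range fun a => ∑ i ∈ t, w i * φ i a) := by
  choose B hB using hφ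
  refine ⟨∑ i ∈ t, w i * B i, ?_⟩
  rintro _ ⟨a, rfl⟩
  exact Finset.sum_le_sum fun i _ => mul_le_mul_of_nonneg_left (hB i ⟨a, rfl⟩) (hw i)

section InnerProductSpace

variable {E : Type*} [NormedAddCommGroup E] [InnerProductSpace ℝ E]

lemma bddBelow_range_mul_norm_sub_sq_sub_mul_norm_sub_sq {r s : ℝ} (h : r < s) (p q : E) :
    BddBelow (range fun y => s / 2 * ‖y - p‖ ^ 2 - r / 2 * ‖q - y‖ ^ 2) := by
  set u := s • p - r • q
  refine ⟨(s / 2 * ‖p‖ ^ 2 - r / 2 * ‖q‖ ^ 2) - ‖u‖ ^ 2 / (2 * (s - r)), ?_⟩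
  rintro _ ⟨y, rfl⟩
  have expand : s / 2 * ‖y - p‖ ^ 2 - r / 2 * ‖q - y‖ ^ 2
      = (s - r) / 2 * ‖y‖ ^ 2 - ⟪u, y⟫ + (s / 2 * ‖p‖ ^ 2 - r / 2 * ‖q‖ ^ 2) := by
    rw [norm_sub_sq_real, norm_sub_sq_real, inner_sub_left, real_inner_smul_left,
      real_inner_smul_left, real_inner_comm y p]
    ring
  have hinner : ⟪u, y⟫ ≤ ‖u‖ * ‖y‖ := real_inner_le_norm u y
  have hsquare : ‖u‖ * ‖y‖ - (s - r) / 2 * ‖y‖ ^ 2 ≤ ‖u‖ ^ 2 / (2 * (s - r)) := by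
    rw [le_div_iff₀ (by linarith)]
    nlinarith [sq_nonneg ((s - r) * ‖y‖ - ‖u‖)]
  linarith

lemma norm_sub_sq_sub_norm_sub_sq_smul_add_smul (y xb x₁ x₂ : E) {a b : ℝ} (hab : a + b = 1) :
    ‖y - (a • x₁ + b • x₂)‖ ^ 2 - ‖a • x₁ + b • x₂ - xb‖ ^ 2
      = a * (‖y - x₁‖ ^ 2 - ‖x₁ - xb‖ ^ 2) + b * (‖y - x₂‖ ^ 2 - ‖x₂ - xb‖ ^ 2) := by
  obtain rfl : b = 1 - a := by linarith
  simp only [norm_sub_sq_real, inner_add_right, inner_add_left, real_inner_smul_right,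
    real_inner_smul_left]
  ring

theorem convexOn_neg_ciInf_add_mul_norm_sub_sq (g : E → ℝ) (s : ℝ)
    (hg : ∀ x, BddBelow (range fun y => g y + s / 2 * ‖y - x‖ ^ 2)) (xb : E) :
    ConvexOn ℝ univ fun x => -(⨅ y, g y + s / 2 * ‖y - x‖ ^ 2) + s / 2 * ‖x - xb‖ ^ 2 := by
  refine ⟨convex_univ, fun x₁ _ x₂ _ a b ha hb hab => ?_⟩
  simp only [smul_eq_mul]
  suffices a * (⨅ y, g y + s / 2 * ‖y - x₁‖ ^ 2) + b * (⨅ y, g y + s / 2 * ‖y - x₂‖ ^ 2)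
      - s / 2 * (a * ‖x₁ - xb‖ ^ 2 + b * ‖x₂ - xb‖ ^ 2) + s / 2 * ‖a • x₁ + b • x₂ - xb‖ ^ 2
      ≤ ⨅ y, g y + s / 2 * ‖y - (a • x₁ + b • x₂)‖ ^ 2 by linarith
  refine le_ciInf fun y => ?_
  have h₁ := mul_le_mul_of_nonneg_left (ciInf_le (hg x₁) y) ha
  have h₂ := mul_le_mul_of_nonneg_left (ciInf_le (hg x₂) y) hb
  linear_combination -(s / 2) * norm_sub_sq_sub_norm_sub_sq_smul_add_smul y xb x₁ x₂ hab
    + g y * hab + h₁ + h₂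

lemma convexOn_add_mul_norm_sq_of_le {φ : E → ℝ} {a c : ℝ} (hac : a ≤ c)
    (hφ : ConvexOn ℝ univ fun x => φ x + a * ‖x‖ ^ 2) :
    ConvexOn ℝ univ fun x => φ x + c * ‖x‖ ^ 2 := by
  have hsq : ConvexOn ℝ univ fun x : E => (c - a) * ‖x‖ ^ 2 :=
    (convexOn_univ_norm.pow (fun x _ => norm_nonneg x) 2).smul (sub_nonneg.2 hac)
  exact (hφ.add hsq).congr fun x _ => by simp only [Pi.add_apply]; ring

end InnerProductSpace

section Moreau

variable {n : ℕ}

lemma moreau_coe_eq_ciInf {g : EuclideanSpace ℝ (Fin n) → ℝ} {s : ℝ} {x : EuclideanSpace ℝ (Fin n)}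
    (hg : BddBelow (range fun y => g y + s / 2 * ‖y - x‖ ^ 2)) :
    moreau s (fun y => (g y : EReal)) x = ((⨅ y, g y + s / 2 * ‖y - x‖ ^ 2 : ℝ) : EReal) := by
  simp only [moreau, ← EReal.coe_add, EReal.coe_ciInf hg]

lemma toReal_moreau_le {r : ℝ} {f : EuclideanSpace ℝ (Fin n) → EReal}
    {y z : EuclideanSpace ℝ (Fin n)} (hy : moreau r f y ≠ ⊥) (hz : f z ≠ ⊤) (hz' : f z ≠ ⊥) :
    (moreau r f y).toReal ≤ (f z).toReal + r / 2 * ‖z - y‖ ^ 2 := by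
  have hle : moreau r f y ≤ f z + ((r / 2 * ‖z - y‖ ^ 2 : ℝ) : EReal) := iInf_le _ z
  rw [← EReal.coe_toReal hz hz', ← EReal.coe_add] at hle
  exact EReal.toReal_coe (_ : ℝ) ▸ EReal.toReal_le_toReal hle hy (EReal.coe_ne_top _)

lemma bddBelow_range_neg_toReal_moreau_add {r s : ℝ} (hrs : r < s)
    {f : EuclideanSpace ℝ (Fin n) → EReal} (hf : ∀ y, moreau r f y ≠ ⊥)
    {z : EuclideanSpace ℝ (Fin n)} (hz : f z ≠ ⊤) (hz' : f z ≠ ⊥) (x : EuclideanSpace ℝ (Fin n)) :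
    BddBelow (range fun y => -(moreau r f y).toReal + s / 2 * ‖y - x‖ ^ 2) := by
  obtain ⟨B, hB⟩ := bddBelow_range_mul_norm_sub_sq_sub_mul_norm_sub_sq hrs x z
  refine ⟨-(f z).toReal + B, ?_⟩
  rintro _ ⟨y, rfl⟩
  linarith [hB ⟨y, rfl⟩, toReal_moreau_le (r := r) (hf y) hz hz']

end Moreau

theorem ncProxAverage_shifted_quad_convex_general {n m : ℕ}
    (f : Fin m → EuclideanSpace ℝ (Fin n) → EReal)
    (hne_bot : ∀ i x, f i x ≠ ⊥) (hproper : ∀ i, ∃ x, f i x ≠ ⊤)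
    (rth : Fin m → ℝ)
    (hpb : ∀ i, ∀ s : ℝ, rth i < s → ∀ x, moreau s (f i) x ≠ ⊥)
    (r : ℝ) (hr : ∀ i, rth i < r)
    (δ : (Fin m → ℝ) → ℝ)
    (lam : Fin m → ℝ) (hlam : lam ∈ simplex m) (hdpos : 0 < δ lam) :
    (∀ xb : EuclideanSpace ℝ (Fin n),
      ConvexOn ℝ Set.univ (fun x : EuclideanSpace ℝ (Fin n) =>
        (-(moreau (r + δ lam)
            (fun y => (((-(∑ i, lam i * (moreau r (f i) y).toReal)) : ℝ) : EReal)) x).toReal)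
          + ((r + δ lam) / 2) * ‖x - xb‖ ^ 2) ) ∧
    (∃ c : ℝ, 0 < c ∧ ConvexOn ℝ Set.univ (fun x : EuclideanSpace ℝ (Fin n) =>
        (-(moreau (r + δ lam)
            (fun y => (((-(∑ i, lam i * (moreau r (f i) y).toReal)) : ℝ) : EReal)) x).toReal)
          + c * ‖x‖ ^ 2)) := by
  set s := r + δ lam
  set g : EuclideanSpace ℝ (Fin n) → ℝ := fun y => -(∑ i, lam i * (moreau r (f i) y).toReal)
  choose z hz using hproper
  have hbdd : ∀ x, BddBelow (range fun y => g y + s / 2 * ‖y - x‖ ^ 2) := by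
    intro x
    have hsum : (fun y => g y + s / 2 * ‖y - x‖ ^ 2) = fun y =>
        ∑ i, lam i * (-(moreau r (f i) y).toReal + s / 2 * ‖y - x‖ ^ 2) := by
      funext y
      simp only [g, mul_add, mul_neg, Finset.sum_add_distrib, Finset.sum_neg_distrib,
        ← Finset.sum_mul, hlam.2, one_mul]
    rw [hsum]
    exact BddBelow.range_sum_mul _ hlam.1 fun i => bddBelow_range_neg_toReal_moreau_add
      (by linarith [hr i]) (hpb i r (hr i)) (hz i) (hne_bot i (z i)) x
  have hconv : ∀ xb, ConvexOn ℝ univ fun x =>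
      -(moreau s (fun y => (g y : EReal)) x).toReal + s / 2 * ‖x - xb‖ ^ 2 := by
    intro xb
    simpa only [moreau_coe_eq_ciInf (hbdd _), EReal.toReal_coe]
      using convexOn_neg_ciInf_add_mul_norm_sub_sq g s hbdd xb
  refine ⟨hconv, max (s / 2) 1, lt_max_of_lt_right one_pos, ?_⟩
  exact convexOn_add_mul_norm_sq_of_le (le_max_left _ _) (by simpa only [sub_zero] using hconv 0)

theorem ncProxAverage_shifted_quad_convex {n m : ℕ}
    (f : Fin m → EuclideanSpace ℝ (Fin n) → EReal)
    (hne_bot : ∀ i x, f i x ≠ ⊥) (hproper : ∀ i, ∃ x, f i x ≠ ⊤)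
    (hlsc : ∀ i, LowerSemicontinuous (f i))
    (rth : Fin m → ℝ)
    (hpb : ∀ i, ∀ s : ℝ, rth i < s → ∀ x, moreau s (f i) x ≠ ⊥)
    (r : ℝ) (hr : ∀ i, rth i < r)
    (δ : (Fin m → ℝ) → ℝ)
    (hδcont : ContinuousOn δ (simplex m))
    (hδnn : ∀ lam ∈ simplex m, 0 ≤ δ lam)
    (hδ0 : ∀ lam ∈ simplex m, (δ lam = 0 ↔ ∃ i, lam = Pi.single i 1))
    (lam : Fin m → ℝ) (hlam : lam ∈ simplex m) (hdpos : 0 < δ lam) :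
    (∀ xb : EuclideanSpace ℝ (Fin n),
      ConvexOn ℝ Set.univ (fun x : EuclideanSpace ℝ (Fin n) =>
        (-(moreau (r + δ lam)
            (fun y => (((-(∑ i, lam i * (moreau r (f i) y).toReal)) : ℝ) : EReal)) x).toReal)
          + ((r + δ lam) / 2) * ‖x - xb‖ ^ 2) ) ∧
    (∃ c : ℝ, 0 < c ∧ ConvexOn ℝ Set.univ (fun x : EuclideanSpace ℝ (Fin n) =>
        (-(moreau (r + δ lam)
            (fun y => (((-(∑ i, lam i * (moreau r (f i) y).toReal)) : ℝ) : EReal)) x).toReal)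
          + c * ‖x‖ ^ 2)) :=
  ncProxAverage_shifted_quad_convex_general f hne_bot hproper rth hpb r hr δ lam hlam hdpos
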